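/- arXiv:1205.4515 — 3 statements merged into one kernel-verified Lean document; each statement's English description precedes it below -/
import Mathlib

section
/- Let f ∈ F_q((X^{-1})) \ F_q(X) with continued fraction expansion (a_n) and approximation exponent ν = ν(f). Then 2 - 2/ν = 1 + limsup_{n→∞} log|a_{n+1}| / log|a_{n+1} ∏_{i=1}^{n} a_i^2|, where |·| is the degree absolute value on F_q((X^{-1})). Equivalently, 2/ν = 1 - limsup_{n→∞} deg a_{n+1} / (deg a_{n+1} + 2∑_{i=1}^n deg a_i). -/
noncomputable section
open scoped Classical

open Polynomial

variable {Fq : Type} [Field Fq] [Fintype Fq]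

/-- The variable t = X⁻¹ of the Laurent series field F_q((X⁻¹)) = `LaurentSeries Fq`. -/
def tvar (Fq : Type) [Field Fq] : LaurentSeries Fq := HahnSeries.single (1 : ℤ) (1 : Fq)

/-- Embedding of polynomials in X into F_q((X⁻¹)), sending X to t⁻¹. -/
def emb (p : Polynomial Fq) : LaurentSeries Fq :=
  Polynomial.eval₂ HahnSeries.C (tvar Fq)⁻¹ p

/-- The absolute value |f| = q^{-order(f)}. -/
def absK (f : LaurentSeries Fq) : ℝ :=
  if f = 0 then 0 else (Fintype.card Fq : ℝ) ^ (-(HahnSeries.order f))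

/-- f is irrational, i.e. f ∈ K̂ \ K. -/
def IrrationalLS (f : LaurentSeries Fq) : Prop :=
  ∀ P Q : Polynomial Fq, Q ≠ 0 → f ≠ emb P / emb Q

/-- The integral part [f] ∈ F_q[X] of a Laurent series f = ∑ f_i X^{-i}:
the polynomial ∑_{i ≤ 0} f_i X^{-i}. -/
def intPart (f : LaurentSeries Fq) : Polynomial Fq :=
  ∑ j ∈ Finset.range (Int.toNat (1 - f.order)),
    Polynomial.C (f.coeff (-(j : ℤ))) * Polynomial.X ^ j

/-- `ContFrac f h a` : `a` is the continued fraction expansion of `f`, with `h` the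
sequence of complete quotients, obtained by iterating Artin's map. -/
def ContFrac (f : LaurentSeries Fq) (h : ℕ → LaurentSeries Fq)
    (a : ℕ → Polynomial Fq) : Prop :=
  h 0 = f ∧ (∀ n, a n = intPart (h n)) ∧ ∀ n, h (n + 1) = (h n - emb (a n))⁻¹

/-- `ConvRec a P Q` : `P (n+1)/Q (n+1)` are the convergents `P_n/Q_n` of the continued
fraction with partial quotients `a`; indices are shifted by one so that `P 0 = P_{-1}`. -/
def ConvRec (a P Q : ℕ → Polynomial Fq) : Prop :=
  P 0 = 1 ∧ Q 0 = 0 ∧ P 1 = a 0 ∧ Q 1 = 1 ∧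
  (∀ n, P (n + 2) = a (n + 1) * P (n + 1) + P n) ∧
  (∀ n, Q (n + 2) = a (n + 1) * Q (n + 1) + Q n)

open scoped ENNReal

/-- The set of exponents ν' > 0 such that |f - P/Q| ≤ |Q|^{-ν'} has infinitely many
coprime solutions P/Q ∈ F_q(X). -/
def nuSet (f : LaurentSeries Fq) : Set ℝ :=
  {ν' : ℝ | 0 < ν' ∧
    {r : LaurentSeries Fq | ∃ P Q : Polynomial Fq, Q ≠ 0 ∧ IsCoprime P Q ∧
      r = emb P / emb Q ∧ absK (f - r) ≤ (absK (emb Q)) ^ (-ν')}.Infinite}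

/-- The approximation exponent ν(f) ∈ [0,∞]. -/
def nu (f : LaurentSeries Fq) : ℝ≥0∞ := sSup (ENNReal.ofReal '' nuSet f)

/-!
Write `s_n = ∑_{i=1}^n deg a_i` and `ord = -log_q |·|`. The convergents `p_n / q_n` satisfy
`deg q_n = s_n` and `ord (f - p_n / q_n) = s_{n+1} + s_n`, since `q_n f - p_n = ±(h_1 ⋯ h_{n+1})⁻¹`
for the complete quotients `h_i`, and `ord h_i = -deg a_i`.
Conversely, as in Legendre's theorem, a reduced fraction `P / Q` with `deg Q ≥ 1` and
`|f - P / Q| < |Q|⁻²` is a convergent, while those with `deg Q = 0` and `|f - P / Q| ≤ 1` are among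
the finitely many `a_0 + c`, `c ∈ F_q`. Hence `ν(f) = 2 + limsup deg a_{n+1} / s_n`, and the
identities follow by pushing this `limsup` through the increasing continuous map
`x ↦ 1 - 2 / (x + 2)`, which sends `deg a_{n+1} / s_n` to `deg a_{n+1} / (deg a_{n+1} + 2 s_n)`.
-/

section Laurent

variable {K : Type} [Field K]

namespace LaurentSeries

theorem order_inv {g : LaurentSeries K} (hg : g ≠ 0) : g⁻¹.order = -g.order := by
  have := HahnSeries.order_mul hg (inv_ne_zero hg)
  rw [mul_inv_cancel₀ hg, HahnSeries.order_one] at this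
  omega

theorem order_div {u v : LaurentSeries K} (hu : u ≠ 0) (hv : v ≠ 0) :
    (u / v).order = u.order - v.order := by
  rw [div_eq_mul_inv, HahnSeries.order_mul hu (inv_ne_zero hv), order_inv hv, sub_eq_add_neg]

end LaurentSeries

@[simp] theorem emb_zero : emb (0 : K[X]) = 0 := eval₂_zero _ _
@[simp] theorem emb_one : emb (1 : K[X]) = 1 := eval₂_one _ _
theorem emb_add (P Q : K[X]) : emb (P + Q) = emb P + emb Q := eval₂_add _ _
theorem emb_sub (P Q : K[X]) : emb (P - Q) = emb P - emb Q := eval₂_sub _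
theorem emb_mul (P Q : K[X]) : emb (P * Q) = emb P * emb Q := eval₂_mul _ _

theorem emb_eq_sum (P : K[X]) :
    emb P = ∑ i ∈ P.support, HahnSeries.single (-(i : ℤ)) (P.coeff i) := by
  rw [emb, eval₂_eq_sum, Polynomial.sum, tvar, HahnSeries.inv_single, inv_one]
  refine Finset.sum_congr rfl fun i _ => ?_
  rw [HahnSeries.single_pow, HahnSeries.C_apply, HahnSeries.single_mul_single, one_pow,
    mul_one, zero_add, smul_neg, nsmul_eq_mul, mul_one]

theorem coeff_emb_neg_natCast (P : K[X]) (j : ℕ) : (emb P).coeff (-(j : ℤ)) = P.coeff j := by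
  rw [emb_eq_sum, HahnSeries.coeff_sum, Finset.sum_eq_single j]
  · exact HahnSeries.coeff_single_same _ _
  · intro i _ hij
    exact HahnSeries.coeff_single_of_ne (by omega)
  · intro hj
    rw [notMem_support_iff.mp hj, HahnSeries.single_eq_zero, HahnSeries.coeff_zero]

theorem coeff_emb_of_nonpos (P : K[X]) {k : ℤ} (hk : k ≤ 0) :
    (emb P).coeff k = P.coeff (-k).toNat := by
  rw [← coeff_emb_neg_natCast, Int.toNat_of_nonneg (by omega), neg_neg]

theorem emb_injective : Function.Injective (emb (Fq := K)) := fun P Q h => by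
  ext j
  rw [← coeff_emb_neg_natCast, h, coeff_emb_neg_natCast]

theorem emb_ne_zero {P : K[X]} (hP : P ≠ 0) : emb P ≠ 0 := by
  simpa using emb_injective.ne hP

theorem order_emb {P : K[X]} (hP : P ≠ 0) : (emb P).order = -(P.natDegree : ℤ) := by
  refine le_antisymm (HahnSeries.order_le_of_coeff_ne_zero ?_)
    ((HahnSeries.le_order_iff_forall (emb_ne_zero hP)).2 fun k hk => ?_)
  · rw [coeff_emb_neg_natCast]
    exact leadingCoeff_ne_zero.mpr hP
  · rw [coeff_emb_of_nonpos P (by omega)]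
    exact coeff_eq_zero_of_natDegree_lt (by omega)

theorem coeff_intPart (g : LaurentSeries K) (j : ℕ) : (intPart g).coeff j = g.coeff (-(j : ℤ)) := by
  rw [intPart, finsetSum_coeff]
  simp only [coeff_C_mul, coeff_X_pow, mul_ite, mul_one, mul_zero, Finset.sum_ite_eq,
    Finset.mem_range, ite_eq_left_iff, not_lt]
  intro hj
  exact (HahnSeries.coeff_eq_zero_of_lt_order (by omega)).symm

theorem coeff_sub_emb_intPart (g : LaurentSeries K) {k : ℤ} (hk : k ≤ 0) :
    (g - emb (intPart g)).coeff k = 0 := by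
  rw [HahnSeries.coeff_sub, coeff_emb_of_nonpos _ hk, coeff_intPart,
    Int.toNat_of_nonneg (by omega), neg_neg, sub_self]

theorem intPart_zero : intPart (0 : LaurentSeries K) = 0 := by
  ext j
  rw [coeff_intPart, HahnSeries.coeff_zero, coeff_zero]

theorem natDegree_intPart {g : LaurentSeries K} (hg : g ≠ 0) (hord : g.order ≤ 0) :
    ((intPart g).natDegree : ℤ) = -g.order := by
  have hlead : (intPart g).coeff (-g.order).toNat ≠ 0 := by
    rw [coeff_intPart, Int.toNat_of_nonneg (by omega), neg_neg]
    exact HahnSeries.coeff_order_eq_zero.not.mpr hg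
  rw [natDegree_eq_of_le_of_coeff_ne_zero ?_ hlead, Int.toNat_of_nonneg (by omega)]
  refine natDegree_le_iff_coeff_eq_zero.2 fun j hj => ?_
  rw [coeff_intPart]
  exact HahnSeries.coeff_eq_zero_of_lt_order (by omega)

theorem exists_eq_add_C_of_coeff_sub_emb {g : LaurentSeries K} {P R : K[X]}
    (hP : ∀ k < 0, (g - emb P).coeff k = 0) (hR : ∀ k < 0, (g - emb R).coeff k = 0) :
    ∃ c, R = P + Polynomial.C c := by
  refine ⟨(R - P).coeff 0, ?_⟩
  rw [← eq_C_of_natDegree_le_zero, add_sub_cancel]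
  refine natDegree_le_iff_coeff_eq_zero.2 fun j hj => ?_
  have hP' := hP (-j) (by omega)
  have hR' := hR (-j) (by omega)
  rw [HahnSeries.coeff_sub, coeff_emb_neg_natCast] at hP' hR'
  rw [coeff_sub]
  linear_combination hP' - hR'

theorem exists_emb_eq_div_of_natDegree_eq_zero {K : Type} [Field K] (P : K[X]) {Q : K[X]}
    (hQ : Q ≠ 0) (hQ0 : Q.natDegree = 0) : ∃ R, emb R = emb P / emb Q := by
  obtain ⟨c, rfl⟩ : ∃ c, Q = Polynomial.C c := ⟨_, eq_C_of_natDegree_eq_zero hQ0⟩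
  refine ⟨Polynomial.C c⁻¹ * P, (eq_div_iff (emb_ne_zero hQ)).2 ?_⟩
  rw [← emb_mul, mul_right_comm, ← Polynomial.C_mul,
    inv_mul_cancel₀ (Polynomial.C_ne_zero.1 hQ), Polynomial.C_1, one_mul]

end Laurent

section Convergents

variable {R : Type*} [CommRing R] (a : ℕ → R)

def contFracRec (x₀ x₁ : R) : ℕ → R
  | 0 => x₀
  | 1 => x₁
  | n + 2 => a (n + 1) * contFracRec x₀ x₁ (n + 1) + contFracRec x₀ x₁ n

/-- As in `ConvRec`, index `n + 1` holds `p_n`, so that `convNum a 0 = p_{-1} = 1`. -/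
def convNum : ℕ → R := contFracRec a 1 (a 0)

def convDen : ℕ → R := contFracRec a 0 1

theorem contFracRec_add_two (x₀ x₁ : R) (n : ℕ) :
    contFracRec a x₀ x₁ (n + 2) =
      a (n + 1) * contFracRec a x₀ x₁ (n + 1) + contFracRec a x₀ x₁ n := rfl

theorem convDen_add_two (n : ℕ) :
    convDen a (n + 2) = a (n + 1) * convDen a (n + 1) + convDen a n := rfl

theorem contFracRec_det (x₀ x₁ y₀ y₁ : R) (n : ℕ) :
    contFracRec a x₀ x₁ (n + 1) * contFracRec a y₀ y₁ n -
        contFracRec a x₀ x₁ n * contFracRec a y₀ y₁ (n + 1) =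
      (-1) ^ n * (x₁ * y₀ - x₀ * y₁) := by
  induction n with
  | zero => simp [contFracRec]
  | succ n ih =>
    rw [contFracRec_add_two, contFracRec_add_two, pow_succ]
    linear_combination -ih

theorem isCoprime_convNum_convDen (n : ℕ) : IsCoprime (convNum a n) (convDen a n) := by
  have hdet : convNum a (n + 1) * convDen a n - convNum a n * convDen a (n + 1) = -(-1) ^ n :=
    (contFracRec_det a 1 (a 0) 0 1 n).trans (by ring)
  have hsq : ((-1 : R) ^ n) ^ 2 = 1 := by rw [← pow_mul, mul_comm, pow_mul, neg_one_sq, one_pow]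
  refine ⟨(-1) ^ n * convDen a (n + 1), -(-1) ^ n * convNum a (n + 1), ?_⟩
  linear_combination -(-1) ^ n * hdet + hsq

end Convergents

section Degrees

variable {R : Type*} [Semiring R] (a : ℕ → R[X])

def degSum (n : ℕ) : ℕ := ∑ i ∈ Finset.Icc 1 n, (a i).natDegree

theorem degSum_zero : degSum a 0 = 0 := rfl

theorem degSum_succ (n : ℕ) : degSum a (n + 1) = degSum a n + (a (n + 1)).natDegree :=
  Finset.sum_Icc_succ_top (by omega) _

variable {a}

theorem degSum_strictMono (hdeg : ∀ i, 1 ≤ i → 0 < (a i).natDegree) : StrictMono (degSum a) :=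
  strictMono_nat_of_lt_succ fun n => by
    rw [degSum_succ]
    have := hdeg (n + 1) (by omega)
    omega

end Degrees

section DenominatorDegree

variable {R : Type*} [CommRing R] [IsDomain R] {a : ℕ → R[X]}

theorem degree_convDen_succ (hdeg : ∀ i, 1 ≤ i → 0 < (a i).natDegree) (n : ℕ) :
    (convDen a (n + 1)).degree = degSum a n := by
  suffices ∀ n, (convDen a n).degree < (convDen a (n + 1)).degree ∧
      (convDen a (n + 1)).degree = degSum a n from (this n).2
  intro n
  induction n with
  | zero => simp [convDen, contFracRec, degSum]
  | succ n ih =>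
    have ha : a (n + 1) ≠ 0 := ne_zero_of_natDegree_gt (hdeg (n + 1) (by omega))
    have hlead : (a (n + 1) * convDen a (n + 1)).degree = degSum a (n + 1) := by
      rw [degree_mul, ih.2, degree_eq_natDegree ha, degSum_succ]
      norm_cast
      omega
    have hlt : (convDen a (n + 1)).degree < (a (n + 1) * convDen a (n + 1)).degree := by
      rw [hlead, ih.2, Nat.cast_lt]
      exact degSum_strictMono hdeg n.lt_succ_self
    have hsum : (convDen a (n + 2)).degree = degSum a (n + 1) := by
      rw [convDen_add_two, degree_add_eq_left_of_degree_lt (ih.1.trans hlt), hlead]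
    exact ⟨hsum ▸ hlead ▸ hlt, hsum⟩

theorem convDen_succ_ne_zero (hdeg : ∀ i, 1 ≤ i → 0 < (a i).natDegree) (n : ℕ) :
    convDen a (n + 1) ≠ 0 := by
  intro h0
  simpa [h0] using degree_convDen_succ hdeg n

theorem natDegree_convDen_succ (hdeg : ∀ i, 1 ≤ i → 0 < (a i).natDegree) (n : ℕ) :
    (convDen a (n + 1)).natDegree = degSum a n :=
  natDegree_eq_of_degree_eq_some (degree_convDen_succ hdeg n)

end DenominatorDegree

theorem natDegree_eq_of_mul_eq_mul_of_isCoprime {R : Type*} [CommRing R] [IsDomain R]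
    {P Q P' Q' : R[X]} (hPQ : IsCoprime P Q) (hPQ' : IsCoprime P' Q') (hQ : Q ≠ 0) (hQ' : Q' ≠ 0)
    (h : P * Q' = P' * Q) : Q.natDegree = Q'.natDegree :=
  le_antisymm
    (natDegree_le_of_dvd (hPQ.symm.dvd_of_dvd_mul_left ⟨P', by linear_combination h⟩) hQ')
    (natDegree_le_of_dvd (hPQ'.symm.dvd_of_dvd_mul_left ⟨P, by linear_combination -h⟩) hQ)

namespace ContFrac

variable {K : Type} [Field K] {f : LaurentSeries K} {h : ℕ → LaurentSeries K} {a : ℕ → K[X]}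

def convErr (f : LaurentSeries K) (a : ℕ → K[X]) (n : ℕ) : LaurentSeries K :=
  f * emb (convDen a n) - emb (convNum a n)

def convergent (a : ℕ → K[X]) (n : ℕ) : LaurentSeries K :=
  emb (convNum a (n + 1)) / emb (convDen a (n + 1))

theorem convErr_add_two (n : ℕ) :
    convErr f a (n + 2) = emb (a (n + 1)) * convErr f a (n + 1) + convErr f a n := by
  simp only [convErr, convDen_add_two, convNum, contFracRec_add_two, emb_add, emb_mul]
  ring

theorem exists_eq_add_C_of_order_nonneg (hcf : ContFrac f h a) {R : K[X]}
    (hR : 0 ≤ (f - emb R).order) : ∃ c, R = a 0 + Polynomial.C c := by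
  refine exists_eq_add_C_of_coeff_sub_emb (g := f) (fun k hk => ?_)
    (fun k hk => HahnSeries.coeff_eq_zero_of_lt_order (by omega))
  rw [hcf.2.1, hcf.1]
  exact coeff_sub_emb_intPart f hk.le

variable (hdeg : ∀ i, 1 ≤ i → 0 < (a i).natDegree)
include hdeg

theorem sub_convergent_eq (n : ℕ) :
    f - convergent a n = convErr f a (n + 1) / emb (convDen a (n + 1)) := by
  have := emb_ne_zero (convDen_succ_ne_zero hdeg n)
  rw [convergent, convErr]
  field_simp

variable (hcf : ContFrac f h a)
include hcf

-- Otherwise `h (n + 1) = 0⁻¹ = 0`, so `a (n + 1) = intPart 0` would have degree `0`.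
theorem sub_emb_ne_zero (n : ℕ) : h n - emb (a n) ≠ 0 := by
  intro h0
  have := hdeg (n + 1) n.succ_pos
  rw [hcf.2.1, hcf.2.2, h0, inv_zero, intPart_zero] at this
  exact this.ne rfl

theorem succ_ne_zero (n : ℕ) : h (n + 1) ≠ 0 := by
  rw [hcf.2.2]
  exact inv_ne_zero (hcf.sub_emb_ne_zero hdeg n)

theorem order_succ (n : ℕ) : (h (n + 1)).order = -((a (n + 1)).natDegree : ℤ) := by
  have hfrac : 1 ≤ (h n - emb (a n)).order := by
    refine (HahnSeries.le_order_iff_forall (hcf.sub_emb_ne_zero hdeg n)).2 fun k hk => ?_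
    rw [hcf.2.1 n]
    exact coeff_sub_emb_intPart _ (by omega)
  have hord : (h (n + 1)).order = -(h n - emb (a n)).order := by
    rw [hcf.2.2, LaurentSeries.order_inv (hcf.sub_emb_ne_zero hdeg n)]
  rw [hcf.2.1 (n + 1), natDegree_intPart (hcf.succ_ne_zero hdeg n) (by omega), neg_neg]

theorem mul_convErr_succ (n : ℕ) : h (n + 1) * convErr f a (n + 1) = -convErr f a n := by
  induction n with
  | zero =>
    have hne := hcf.sub_emb_ne_zero hdeg 0
    rw [hcf.1] at hne
    simp [convErr, convNum, convDen, contFracRec, hcf.2.2, hcf.1, inv_mul_cancel₀ hne]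
  | succ n ih =>
    have hne := hcf.sub_emb_ne_zero hdeg (n + 1)
    have hrec : convErr f a (n + 2) = -(h (n + 1) - emb (a (n + 1))) * convErr f a (n + 1) := by
      rw [convErr_add_two]
      linear_combination ih
    rw [hrec, hcf.2.2, neg_mul, mul_neg, ← mul_assoc, inv_mul_cancel₀ hne, one_mul]

theorem convErr_ne_zero_and_order (n : ℕ) :
    convErr f a n ≠ 0 ∧ (convErr f a n).order = degSum a n := by
  induction n with
  | zero => simp [convErr, convNum, convDen, contFracRec, degSum_zero]
  | succ n ih =>
    have hrec := hcf.mul_convErr_succ hdeg n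
    have hne : convErr f a (n + 1) ≠ 0 := by
      rintro h0
      rw [h0, mul_zero, eq_comm, neg_eq_zero] at hrec
      exact ih.1 hrec
    have hord := HahnSeries.order_mul (hcf.succ_ne_zero hdeg n) hne
    rw [hrec, HahnSeries.order_neg, ih.2, hcf.order_succ hdeg] at hord
    refine ⟨hne, ?_⟩
    rw [degSum_succ]
    push_cast
    omega

theorem sub_convergent_ne_zero_and_order (n : ℕ) :
    f - convergent a n ≠ 0 ∧ (f - convergent a n).order = degSum a (n + 1) + degSum a n := by
  obtain ⟨hne, hord⟩ := hcf.convErr_ne_zero_and_order hdeg (n + 1)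
  have hq := convDen_succ_ne_zero hdeg n
  rw [sub_convergent_eq hdeg]
  refine ⟨div_ne_zero hne (emb_ne_zero hq), ?_⟩
  rw [LaurentSeries.order_div hne (emb_ne_zero hq), hord, order_emb hq,
    natDegree_convDen_succ hdeg, sub_neg_eq_add]

-- Multiplying by `Q` turns `q_n f - p_n` into a polynomial, whose order is eventually positive.
theorem irrationalLS : IrrationalLS f := by
  intro P Q hQ hf
  set n := Q.natDegree + 1
  obtain ⟨hne, hord⟩ := hcf.convErr_ne_zero_and_order hdeg n
  have hW : emb Q * convErr f a n = emb (P * convDen a n - convNum a n * Q) := by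
    rw [convErr, hf, emb_sub, emb_mul, emb_mul]
    field_simp [emb_ne_zero hQ]
  have hWne : P * convDen a n - convNum a n * Q ≠ 0 := by
    rintro h0
    rw [h0, emb_zero] at hW
    exact mul_ne_zero (emb_ne_zero hQ) hne hW
  have horder := congrArg HahnSeries.order hW
  rw [HahnSeries.order_mul (emb_ne_zero hQ) hne, order_emb hQ, hord, order_emb hWne] at horder
  have := (degSum_strictMono hdeg).id_le n
  simp only [id] at this
  omega

theorem convergent_injective : Function.Injective (convergent (K := K) a) := by
  have hmono : StrictMono fun n => degSum a (n + 1) + degSum a n := fun m n hmn =>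
    add_lt_add (degSum_strictMono hdeg (by omega)) (degSum_strictMono hdeg hmn)
  intro m n hmn
  have hord := (hcf.sub_convergent_ne_zero_and_order hdeg m).2
  rw [hmn, (hcf.sub_convergent_ne_zero_and_order hdeg n).2] at hord
  exact hmono.injective (by exact_mod_cast hord.symm)

/-- The function field analogue of Legendre's theorem: otherwise `P q_n - p_n Q` would be a
nonzero polynomial of positive order. -/
theorem eq_convergent_of_lt_order {P Q : K[X]} (hQ : Q ≠ 0) {n : ℕ}
    (hn : degSum a n ≤ Q.natDegree) (hn' : Q.natDegree < degSum a (n + 1))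
    (hord : 2 * (Q.natDegree : ℤ) < (f - emb P / emb Q).order) :
    emb P / emb Q = convergent a n := by
  by_contra hne
  have hq := convDen_succ_ne_zero hdeg n
  set W := P * convDen a (n + 1) - convNum a (n + 1) * Q
  have hW : W ≠ 0 := fun h0 => hne <| by
    rw [convergent, div_eq_div_iff (emb_ne_zero hQ) (emb_ne_zero hq), ← emb_mul, ← emb_mul,
      sub_eq_zero.1 h0]
  have hdiff : (f - convergent a n) - (f - emb P / emb Q) ≠ 0 := by
    rwa [sub_sub_sub_cancel_left, Ne, sub_eq_zero]
  have hWeq : emb W = emb Q * emb (convDen a (n + 1)) *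
      ((f - convergent a n) - (f - emb P / emb Q)) := by
    rw [emb_sub, emb_mul, emb_mul, convergent]
    field_simp [emb_ne_zero hQ, emb_ne_zero hq]
    ring
  have hmin := HahnSeries.min_order_le_order_add (x := f - convergent a n)
    (y := -(f - emb P / emb Q)) (by rwa [← sub_eq_add_neg])
  rw [HahnSeries.order_neg, ← sub_eq_add_neg,
    (hcf.sub_convergent_ne_zero_and_order hdeg n).2] at hmin
  have horder := congrArg HahnSeries.order hWeq
  rw [order_emb hW, HahnSeries.order_mul (mul_ne_zero (emb_ne_zero hQ) (emb_ne_zero hq)) hdiff,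
    HahnSeries.order_mul (emb_ne_zero hQ) (emb_ne_zero hq), order_emb hQ, order_emb hq,
    natDegree_convDen_succ hdeg] at horder
  omega

theorem exists_eq_convergent {P Q : K[X]} (hQ : Q ≠ 0) (hPQ : IsCoprime P Q)
    (hord : 2 * (Q.natDegree : ℤ) < (f - emb P / emb Q).order) :
    ∃ n, emb P / emb Q = convergent a n ∧ Q.natDegree = degSum a n := by
  have hmono := degSum_strictMono hdeg
  obtain ⟨n, hn, hn'⟩ := hmono.exists_between_of_tendsto_atTop hmono.tendsto_atTop
    (x := Q.natDegree + 1) (by simp [degSum_zero])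
  have hconv := hcf.eq_convergent_of_lt_order hdeg hQ (n := n) (by omega) (by omega) hord
  have hq := convDen_succ_ne_zero hdeg n
  refine ⟨n, hconv, natDegree_convDen_succ hdeg n ▸ natDegree_eq_of_mul_eq_mul_of_isCoprime hPQ
    (isCoprime_convNum_convDen a (n + 1)) hQ hq (emb_injective ?_)⟩
  rwa [emb_mul, emb_mul, ← div_eq_div_iff (emb_ne_zero hQ) (emb_ne_zero hq)]

end ContFrac

open Filter

namespace ENNReal

theorem ofReal_le_natCast_div_iff {x : ℝ} (hx : 0 ≤ x) {m n : ℕ} (hn : n ≠ 0) :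
    ENNReal.ofReal x ≤ (m : ℝ≥0∞) / n ↔ x * n ≤ m := by
  rw [ENNReal.le_div_iff_mul_le (Or.inl (by exact_mod_cast hn)) (Or.inl (natCast_ne_top n)),
    ← ofReal_natCast n, ← ofReal_mul hx, ← ofReal_natCast m, ofReal_le_ofReal_iff (Nat.cast_nonneg m)]

theorem ofReal_eq_two_add {x : ℝ} (hx : 2 ≤ x) : ENNReal.ofReal x = 2 + ENNReal.ofReal (x - 2) := by
  rw [← ofReal_ofNat 2, ← ofReal_add (by norm_num) (by linarith), add_sub_cancel]

theorem natCast_div_natCast_add_two_mul {d s : ℕ} (hs : s ≠ 0) :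
    (d : ℝ≥0∞) / (d + 2 * s) = 1 - 2 / (d / s + 2) := by
  have hs0 : (s : ℝ≥0∞) ≠ 0 := by exact_mod_cast hs
  have hst : (s : ℝ≥0∞) ≠ ⊤ := natCast_ne_top s
  have hx : (d : ℝ≥0∞) = d / s * s := (ENNReal.div_mul_cancel hs0 hst).symm
  have hxt : (d : ℝ≥0∞) / s ≠ ⊤ := div_ne_top (natCast_ne_top d) hs0
  generalize (d : ℝ≥0∞) / s = x at hx hxt ⊢
  have hx2 : x + 2 ≠ 0 := by simp
  rw [hx, show x * s + 2 * s = (x + 2) * s by ring, ENNReal.mul_div_mul_right _ _ hs0 hst]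
  refine (ENNReal.sub_eq_of_eq_add (div_ne_top ofNat_ne_top hx2) ?_).symm
  rw [ENNReal.div_add_div_same, ENNReal.div_self hx2 (add_ne_top.2 ⟨hxt, ofNat_ne_top⟩)]

theorem monotone_one_sub_two_div_add_two : Monotone fun x : ℝ≥0∞ => 1 - 2 / (x + 2) :=
  fun _ _ hxy => tsub_le_tsub_left (ENNReal.div_le_div_left (by gcongr) 2) 1

theorem continuous_one_sub_two_div_add_two : Continuous fun x : ℝ≥0∞ => 1 - 2 / (x + 2) := by
  simp only [div_eq_mul_inv]
  exact (ENNReal.continuous_sub_left one_ne_top).comp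
    ((ENNReal.continuous_const_mul ofNat_ne_top).comp (continuous_add_const 2).inv)

end ENNReal

def degRatio {R : Type*} [Semiring R] (a : ℕ → R[X]) (n : ℕ) : ℝ≥0∞ :=
  (a (n + 1)).natDegree / degSum a n

theorem absK_le_absK_emb_rpow_iff {g : LaurentSeries Fq} (hg : g ≠ 0) {Q : Fq[X]} (hQ : Q ≠ 0)
    (ν : ℝ) : absK g ≤ absK (emb Q) ^ (-ν) ↔ ν * Q.natDegree ≤ g.order := by
  have hq : (1 : ℝ) < Fintype.card Fq := by exact_mod_cast Fintype.one_lt_card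
  rw [absK, if_neg hg, absK, if_neg (emb_ne_zero hQ), order_emb hQ, neg_neg, ← Real.rpow_intCast,
    ← Real.rpow_intCast, ← Real.rpow_mul (by positivity), Real.rpow_le_rpow_left_iff hq]
  push_cast
  constructor <;> intro h <;> linarith

def approxSet (f : LaurentSeries Fq) (ν : ℝ) : Set (LaurentSeries Fq) :=
  {r | ∃ P Q : Fq[X], Q ≠ 0 ∧ IsCoprime P Q ∧ r = emb P / emb Q ∧
    absK (f - r) ≤ absK (emb Q) ^ (-ν)}

theorem mem_nuSet_iff {f : LaurentSeries Fq} {ν : ℝ} :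
    ν ∈ nuSet f ↔ 0 < ν ∧ (approxSet f ν).Infinite := Iff.rfl

namespace ContFrac

variable {f : LaurentSeries Fq} {h : ℕ → LaurentSeries Fq} {a : ℕ → Fq[X]}
  (hcf : ContFrac f h a) (hdeg : ∀ i, 1 ≤ i → 0 < (a i).natDegree)
include hcf hdeg

theorem convergent_mem_approxSet {ν : ℝ} {n : ℕ}
    (hn : (ν - 2) * degSum a n ≤ (a (n + 1)).natDegree) : convergent a n ∈ approxSet f ν := by
  obtain ⟨hne, hord⟩ := hcf.sub_convergent_ne_zero_and_order hdeg n
  refine ⟨_, _, convDen_succ_ne_zero hdeg n, isCoprime_convNum_convDen a (n + 1), rfl, ?_⟩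
  rw [absK_le_absK_emb_rpow_iff hne (convDen_succ_ne_zero hdeg n), hord,
    natDegree_convDen_succ hdeg, degSum_succ]
  push_cast
  linarith

theorem approxSet_subset {ν : ℝ} (hν : 2 < ν) :
    approxSet f ν ⊆ convergent a '' {n | (ν - 2) * degSum a n ≤ (a (n + 1)).natDegree} ∪
      Set.range fun c => emb (a 0 + Polynomial.C c) := by
  rintro r ⟨P, Q, hQ, hPQ, rfl, habs⟩
  have hne : f - emb P / emb Q ≠ 0 := _root_.sub_ne_zero.2 (hcf.irrationalLS hdeg P Q hQ)
  rw [absK_le_absK_emb_rpow_iff hne hQ] at habs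
  rcases Nat.eq_zero_or_pos Q.natDegree with hQ0 | hQ0
  · right
    obtain ⟨R, hR⟩ := exists_emb_eq_div_of_natDegree_eq_zero P hQ hQ0
    rw [hQ0, Nat.cast_zero, mul_zero, ← hR] at habs
    obtain ⟨c, rfl⟩ := hcf.exists_eq_add_C_of_order_nonneg (R := R) (by exact_mod_cast habs)
    exact ⟨c, hR⟩
  · left
    have hlt : 2 * (Q.natDegree : ℤ) < (f - emb P / emb Q).order := by
      have : (2 : ℝ) * Q.natDegree < ν * Q.natDegree :=
        mul_lt_mul_of_pos_right hν (by exact_mod_cast hQ0)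
      exact_mod_cast this.trans_le habs
    obtain ⟨n, hconv, hdegQ⟩ := hcf.exists_eq_convergent hdeg hQ hPQ hlt
    refine ⟨n, ?_, hconv.symm⟩
    rw [hconv, (hcf.sub_convergent_ne_zero_and_order hdeg n).2, hdegQ, degSum_succ] at habs
    push_cast at habs
    simp only [Set.mem_ofPred_eq]
    linarith

theorem mem_nuSet_of_infinite {ν : ℝ} (hν : 0 < ν)
    (hinf : {n | (ν - 2) * degSum a n ≤ (a (n + 1)).natDegree}.Infinite) : ν ∈ nuSet f := by
  refine mem_nuSet_iff.2 ⟨hν, (hinf.image (hcf.convergent_injective hdeg).injOn).mono ?_⟩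
  rintro _ ⟨n, hn, rfl⟩
  exact hcf.convergent_mem_approxSet hdeg hn

theorem infinite_of_mem_nuSet {ν : ℝ} (hν : 2 < ν) (hmem : ν ∈ nuSet f) :
    {n | (ν - 2) * degSum a n ≤ (a (n + 1)).natDegree}.Infinite := by
  have hunion := hmem.2.mono (hcf.approxSet_subset hdeg hν)
  exact ((Set.infinite_union.1 hunion).resolve_right (Set.finite_range _).not_infinite).of_image _

theorem nu_le : nu f ≤ 2 + limsup (degRatio a) atTop := by
  refine sSup_le ?_
  rintro _ ⟨ν, hν, rfl⟩
  rcases le_or_gt ν 2 with hle | hlt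
  · exact (ENNReal.ofReal_le_ofReal hle).trans (by simp)
  have hfreq := (Nat.frequently_atTop_iff_infinite.2
    (hcf.infinite_of_mem_nuSet hdeg hlt hν)).and_eventually (eventually_gt_atTop 0)
  have hle : ENNReal.ofReal (ν - 2) ≤ limsup (degRatio a) atTop := by
    refine le_limsup_of_frequently_le (hfreq.mono fun n ⟨hn, hpos⟩ => ?_)
    exact (ENNReal.ofReal_le_natCast_div_iff (by linarith)
      (degSum_strictMono hdeg hpos).ne').2 hn
  rw [ENNReal.ofReal_eq_two_add hlt.le]
  gcongr

theorem ofReal_le_nu {ν : ℝ} (hν : 0 < ν)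
    (hfreq : ∃ᶠ n in atTop, (ν - 2) * degSum a n ≤ (a (n + 1)).natDegree) :
    ENNReal.ofReal ν ≤ nu f :=
  le_sSup ⟨ν, hcf.mem_nuSet_of_infinite hdeg hν (Nat.frequently_atTop_iff_infinite.1 hfreq), rfl⟩

theorem two_add_limsup_le : 2 + limsup (degRatio a) atTop ≤ nu f := by
  have h2 : 2 ≤ nu f := by
    simpa using hcf.ofReal_le_nu hdeg two_pos (Frequently.of_forall fun n => by simp)
  suffices limsup (degRatio a) atTop ≤ nu f - 2 from
    (add_le_add_right this 2).trans_eq (add_tsub_cancel_of_le h2)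
  refine le_of_forall_lt_imp_le_of_dense fun y hy => ?_
  have hyt : y ≠ ⊤ := hy.ne_top
  have hfreq := frequently_lt_of_lt_limsup (by isBoundedDefault) hy
  have hν := hcf.ofReal_le_nu hdeg (ν := 2 + y.toReal) (by positivity) (hfreq.mono fun n hn => ?_)
  · rw [ENNReal.ofReal_eq_two_add (by simp), add_sub_cancel_left,
      ENNReal.ofReal_toReal hyt] at hν
    exact ENNReal.le_sub_of_add_le_left ENNReal.ofNat_ne_top hν
  · rw [add_sub_cancel_left]
    rcases Nat.eq_zero_or_pos (degSum a n) with h0 | hpos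
    · simp [h0]
    · refine (ENNReal.ofReal_le_natCast_div_iff ENNReal.toReal_nonneg hpos.ne').1 ?_
      rw [ENNReal.ofReal_toReal hyt]
      exact hn.le

theorem nu_eq : nu f = 2 + limsup (degRatio a) atTop :=
  le_antisymm (hcf.nu_le hdeg) (hcf.two_add_limsup_le hdeg)

theorem limsup_eq_one_sub_two_div_nu :
    limsup (fun n : ℕ => ((a (n + 1)).natDegree : ℝ≥0∞) /
      (((a (n + 1)).natDegree : ℝ≥0∞) + 2 * ∑ i ∈ Finset.Icc 1 n, ((a i).natDegree : ℝ≥0∞)))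
      atTop = 1 - 2 / nu f := by
  have hratio : ∀ᶠ n in atTop, ((a (n + 1)).natDegree : ℝ≥0∞) /
      (((a (n + 1)).natDegree : ℝ≥0∞) + 2 * ∑ i ∈ Finset.Icc 1 n, ((a i).natDegree : ℝ≥0∞)) =
      1 - 2 / (degRatio a n + 2) := by
    filter_upwards [eventually_gt_atTop 0] with n hn
    rw [← Nat.cast_sum, ← degSum, degRatio,
      ENNReal.natCast_div_natCast_add_two_mul (degSum_strictMono hdeg hn).ne']
  rw [limsup_congr hratio, hcf.nu_eq hdeg, add_comm,
    ENNReal.monotone_one_sub_two_div_add_two.map_limsup_of_continuousAt _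
      ENNReal.continuous_one_sub_two_div_add_two.continuousAt]
  rfl

end ContFrac

theorem stmt6_general (f : LaurentSeries Fq)
    (h : ℕ → LaurentSeries Fq) (a : ℕ → Polynomial Fq) (hcf : ContFrac f h a)
    (hdeg : ∀ i : ℕ, 1 ≤ i → 0 < (a i).natDegree) :
    (2 : ℝ≥0∞) - 2 / nu f =
      1 + Filter.limsup
        (fun n : ℕ => ((a (n + 1)).natDegree : ℝ≥0∞) /
          (((a (n + 1)).natDegree : ℝ≥0∞) +
            2 * ∑ i ∈ Finset.Icc 1 n, ((a i).natDegree : ℝ≥0∞)))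
        Filter.atTop ∧
    (2 : ℝ≥0∞) / nu f =
      1 - Filter.limsup
        (fun n : ℕ => ((a (n + 1)).natDegree : ℝ≥0∞) /
          (((a (n + 1)).natDegree : ℝ≥0∞) +
            2 * ∑ i ∈ Finset.Icc 1 n, ((a i).natDegree : ℝ≥0∞)))
        Filter.atTop := by
  have hdiv : 2 / nu f ≤ 1 := by
    refine ENNReal.div_le_of_le_mul ?_
    rw [one_mul, hcf.nu_eq hdeg]
    exact le_self_add
  rw [hcf.limsup_eq_one_sub_two_div_nu hdeg, add_comm,
    ENNReal.sub_add_eq_add_sub hdiv (hdiv.trans_lt ENNReal.one_lt_top).ne, one_add_one_eq_two,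
    ENNReal.sub_sub_cancel ENNReal.one_ne_top hdiv]
  exact ⟨rfl, rfl⟩

/-- 2 - 2/ν = 1 + limsup_n log|a_{n+1}| / log|a_{n+1} ∏_{i=1}^n a_i²|,
equivalently 2/ν = 1 - limsup_n deg a_{n+1} / (deg a_{n+1} + 2 ∑_{i=1}^n deg a_i);
since |g| = q^{deg g}, the logarithmic ratio is exactly the ratio of degrees, and the
identity is stated in [0,∞] via that ratio. -/
theorem stmt6 (f : LaurentSeries Fq) (hf : IrrationalLS f)
    (h : ℕ → LaurentSeries Fq) (a : ℕ → Polynomial Fq) (hcf : ContFrac f h a)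
    (hdeg : ∀ i : ℕ, 1 ≤ i → 0 < (a i).natDegree) :
    (2 : ℝ≥0∞) - 2 / nu f =
      1 + Filter.limsup
        (fun n : ℕ => ((a (n + 1)).natDegree : ℝ≥0∞) /
          (((a (n + 1)).natDegree : ℝ≥0∞) +
            2 * ∑ i ∈ Finset.Icc 1 n, ((a i).natDegree : ℝ≥0∞)))
        Filter.atTop ∧
    (2 : ℝ≥0∞) / nu f =
      1 - Filter.limsup
        (fun n : ℕ => ((a (n + 1)).natDegree : ℝ≥0∞) /
          (((a (n + 1)).natDegree : ℝ≥0∞) +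
            2 * ∑ i ∈ Finset.Icc 1 n, ((a i).natDegree : ℝ≥0∞)))
        Filter.atTop :=
  stmt6_general f h a hcf hdeg
end
end

section
/- In a CAT(-1) geodesic metric space X, let x ∈ X and y, z ∈ X be such that x is the closest point to z on the geodesic segment [x,y] (equivalently, the comparison angle at x between z and y is at least π/2). Then d(x, [y,z]) ≤ log(1+√2). -/
noncomputable section

open Filter

variable {X : Type*} [MetricSpace X]

/-- `γ` is a (unit-speed) geodesic segment from `x` to `y`, parametrized by `[0, d(x,y)]`. -/
def IsGeodSeg (γ : ℝ → X) (x y : X) : Prop :=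
  γ 0 = x ∧ γ (dist x y) = y ∧
    ∀ s ∈ Set.Icc (0 : ℝ) (dist x y), ∀ t ∈ Set.Icc (0 : ℝ) (dist x y),
      dist (γ s) (γ t) = |s - t|

/-- `v` is a geodesic line: an isometric map ℝ → X. -/
def IsGeodLine (v : ℝ → X) : Prop := ∀ s t : ℝ, dist (v s) (v t) = |s - t|

/-- `ρ` is a geodesic ray, parametrized by `[0,∞)`. -/
def IsGeodRay (ρ : ℝ → X) : Prop :=
  ∀ s t : ℝ, 0 ≤ s → 0 ≤ t → dist (ρ s) (ρ t) = |s - t|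

/-- `X` is a CAT(-1) geodesic space: it is geodesic, and for any geodesic triangle
with a comparison triangle of the same side lengths in the real hyperbolic plane ℍ²
(of curvature -1, modelled by `UpperHalfPlane` with its hyperbolic metric), the
distance from a vertex to a point of the opposite side is at most the distance between
the comparison points. -/
def CATm1 (X : Type*) [MetricSpace X] : Prop :=
  (∀ x y : X, ∃ γ : ℝ → X, IsGeodSeg γ x y) ∧
  ∀ (x y z : X) (γ : ℝ → X), IsGeodSeg γ y z →
    ∀ (x' y' z' : UpperHalfPlane) (γ' : ℝ → UpperHalfPlane), IsGeodSeg γ' y' z' →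
      dist x y = dist x' y' → dist x z = dist x' z' → dist y z = dist y' z' →
      ∀ t ∈ Set.Icc (0 : ℝ) (dist y z), dist x (γ t) ≤ dist x' (γ' t)

/-- The constant c₁ = log(1+√2). -/
def c₁ : ℝ := Real.log (1 + Real.sqrt 2)

/-- The constant c₂ = 2 log((1+√3)/2). -/
def c₂ : ℝ := 2 * Real.log ((1 + Real.sqrt 3) / 2)

/-!
Place a comparison triangle for `x, y, z` in `ℍ` with `x' = i`, `y' = i e^{d(x,y)}` and
`Re z' ≥ 0`. Comparison for the triangle `z, x, y` shows that `i` is the point of `[x', y']`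
closest to `z'`, which forces `|z'| ≤ 1`: the angle at `i` is at least `π/2`. The geodesic
`[y', z']` is a vertical segment through `i` or an arc of a Euclidean circle centred on `ℝ`, and
when `d(x,y) > c₁` an explicit point of it lies within `c₁` of `i` (`cosh c₁ = √2`). Comparison for
the triangle `x, y, z` then gives a point of `[y, z]` within `c₁` of `x`; when `d(x,y) ≤ c₁`, `y`
itself is such a point.
-/

section GeodesicLine

variable {v : ℝ → X}

lemma IsGeodLine.comp_add (hv : IsGeodLine v) (s : ℝ) : IsGeodLine (fun u => v (s + u)) :=
  fun a b => by rw [hv, add_sub_add_left_eq_sub]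

lemma IsGeodLine.comp_neg (hv : IsGeodLine v) : IsGeodLine (fun u => v (-u)) :=
  fun a b => by rw [hv, neg_sub_neg, abs_sub_comm]

lemma IsGeodLine.isGeodSeg (hv : IsGeodLine v) {t : ℝ} (ht : 0 ≤ t) :
    IsGeodSeg v (v 0) (v t) := by
  have hd : dist (v 0) (v t) = t := by rw [hv, zero_sub, abs_neg, abs_of_nonneg ht]
  exact ⟨rfl, by rw [hd], fun a _ b _ => hv a b⟩

lemma IsGeodLine.exists_isGeodSeg_through (hv : IsGeodLine v) {s w t : ℝ}
    (hsw : s ≤ w) (hwt : w ≤ t) :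
    ∃ σ : ℝ → X, IsGeodSeg σ (v s) (v t) ∧
      ∃ u ∈ Set.Icc (0 : ℝ) (dist (v s) (v t)), σ u = v w := by
  have hseg := (hv.comp_add s).isGeodSeg (sub_nonneg.2 (hsw.trans hwt))
  simp only [add_zero, add_sub_cancel] at hseg
  refine ⟨_, hseg, w - s, ?_, by simp⟩
  rw [hv, abs_sub_comm, abs_of_nonneg (sub_nonneg.2 (hsw.trans hwt))]
  constructor <;> linarith

end GeodesicLine

namespace CATm1

open Real

local notation "ℍ" => UpperHalfPlane

def ofReIm (a b : ℝ) (hb : 0 < b) : ℍ := UpperHalfPlane.mk ⟨a, b⟩ hb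

@[simp] lemma ofReIm_re (a b : ℝ) (hb : 0 < b) : (ofReIm a b hb).re = a := rfl
@[simp] lemma ofReIm_im (a b : ℝ) (hb : 0 < b) : (ofReIm a b hb).im = b := rfl

lemma ofReIm_re_im (z : ℍ) : ofReIm z.re z.im z.im_pos = z :=
  UpperHalfPlane.ext_re_im rfl rfl

def imagAxis (t : ℝ) : ℍ := ofReIm 0 (exp t) (exp_pos t)

@[simp] lemma imagAxis_re (t : ℝ) : (imagAxis t).re = 0 := rfl
@[simp] lemma imagAxis_im (t : ℝ) : (imagAxis t).im = exp t := rfl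

lemma isGeodLine_imagAxis : IsGeodLine imagAxis := fun s t => by
  rw [UpperHalfPlane.dist_of_re_eq (z := imagAxis s) (w := imagAxis t) rfl]
  simp [Real.dist_eq]

lemma cosh_dist_imagAxis (s : ℝ) (z : ℍ) :
    cosh (dist (imagAxis s) z) = (z.re ^ 2 + z.im ^ 2 + exp s ^ 2) / (2 * z.im * exp s) := by
  rw [UpperHalfPlane.cosh_dist']
  simp only [imagAxis_re, imagAxis_im]
  ring

lemma cosh_dist_imagAxis_zero (z : ℍ) :
    cosh (dist (imagAxis 0) z) = (z.re ^ 2 + z.im ^ 2 + 1) / (2 * z.im) := by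
  simp [cosh_dist_imagAxis]

def arc (c r : ℝ) (hr : 0 < r) (t : ℝ) : ℍ :=
  ofReIm (c + r * tanh t) (r / cosh t) (div_pos hr (cosh_pos t))

lemma isGeodLine_arc (c r : ℝ) (hr : 0 < r) : IsGeodLine (arc c r hr) := fun s t => by
  apply cosh_injOn (Set.mem_Ici.2 dist_nonneg) (Set.mem_Ici.2 (abs_nonneg _))
  rw [UpperHalfPlane.cosh_dist', cosh_abs, cosh_sub]
  simp only [arc, ofReIm_re, ofReIm_im, tanh_eq_sinh_div_cosh]
  have hs := cosh_pos s
  have ht := cosh_pos t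
  field_simp
  linear_combination (-(r ^ 2 * cosh t ^ 2)) * cosh_sq s - (r ^ 2 * cosh s ^ 2) * cosh_sq t

lemma arc_arsinh {c r : ℝ} (hr : 0 < r) {x y : ℝ} (hy : 0 < y)
    (h : (x - c) ^ 2 + y ^ 2 = r ^ 2) :
    arc c r hr (arsinh ((x - c) / y)) = ofReIm x y hy := by
  have hcosh : cosh (arsinh ((x - c) / y)) = r / y := by
    rw [cosh_arsinh, show 1 + ((x - c) / y) ^ 2 = (r / y) ^ 2 by field_simp; linarith]
    exact sqrt_sq (by positivity)
  apply UpperHalfPlane.ext_re_im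
  · simp only [arc, ofReIm_re, tanh_eq_sinh_div_cosh, sinh_arsinh, hcosh]
    field_simp
    ring
  · simp only [arc, ofReIm_im, hcosh]
    field_simp

lemma cosh_add_sinh_mul_cos_pos {m : ℝ} (hm : 0 ≤ m) (θ : ℝ) : 0 < cosh m + sinh m * cos θ := by
  have h := cosh_sub_sinh m
  nlinarith [exp_pos (-m), sinh_nonneg_iff.2 hm, neg_one_le_cos θ]

/-- The hyperbolic circle of radius `m` about `i` is the Euclidean circle of center `i cosh m`
and radius `sinh m`; `θ` is the angle about that Euclidean center. -/
def circlePt {m : ℝ} (hm : 0 ≤ m) (θ : ℝ) : ℍ :=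
  ofReIm (sinh m * sin θ) (cosh m + sinh m * cos θ) (cosh_add_sinh_mul_cos_pos hm θ)

lemma dist_imagAxis_zero_circlePt {m : ℝ} (hm : 0 ≤ m) (θ : ℝ) :
    dist (imagAxis 0) (circlePt hm θ) = m := by
  apply cosh_injOn (Set.mem_Ici.2 dist_nonneg) (Set.mem_Ici.2 hm)
  have hY := cosh_add_sinh_mul_cos_pos hm θ
  rw [cosh_dist_imagAxis_zero, div_eq_iff (by simp only [circlePt, ofReIm_im]; positivity)]
  simp only [circlePt, ofReIm_re, ofReIm_im]
  linear_combination sinh m ^ 2 * sin_sq_add_cos_sq θ - cosh_sq m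

lemma circlePt_zero {m : ℝ} (hm : 0 ≤ m) : circlePt hm 0 = imagAxis m :=
  UpperHalfPlane.ext_re_im (by simp [circlePt]) (by simp [circlePt, cosh_add_sinh])

lemma circlePt_pi {m : ℝ} (hm : 0 ≤ m) : circlePt hm π = imagAxis (-m) :=
  UpperHalfPlane.ext_re_im (by simp [circlePt])
    (by simp [circlePt, ← cosh_sub_sinh, sub_eq_add_neg])

lemma exists_comparison_point {b m a : ℝ} (hm : 0 ≤ m) (hlow : |b - m| ≤ a) (hup : a ≤ b + m) :
    ∃ z : ℍ, 0 ≤ z.re ∧ dist (imagAxis 0) z = m ∧ dist (imagAxis b) z = a := by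
  have ha : 0 ≤ a := (abs_nonneg _).trans hlow
  have hcont : ContinuousOn (fun θ => cosh (dist (imagAxis b) (circlePt hm θ))) (Set.Icc 0 π) := by
    simp only [cosh_dist_imagAxis, circlePt, ofReIm_re, ofReIm_im]
    refine ContinuousOn.div (by fun_prop) (by fun_prop) fun θ _ => ?_
    have := cosh_add_sinh_mul_cos_pos hm θ
    positivity
  have hmem : cosh a ∈ Set.Icc (cosh (dist (imagAxis b) (circlePt hm 0)))
      (cosh (dist (imagAxis b) (circlePt hm π))) := by
    rw [circlePt_zero, circlePt_pi, isGeodLine_imagAxis, isGeodLine_imagAxis, Set.mem_Icc,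
      cosh_le_cosh, cosh_le_cosh, abs_abs, abs_abs, abs_of_nonneg ha, sub_neg_eq_add]
    exact ⟨hlow, hup.trans (le_abs_self _)⟩
  obtain ⟨θ, hθ, hcosh⟩ := intermediate_value_Icc pi_nonneg hcont hmem
  refine ⟨circlePt hm θ, mul_nonneg (sinh_nonneg_iff.2 hm) (sin_nonneg_of_nonneg_of_le_pi hθ.1 hθ.2),
    dist_imagAxis_zero_circlePt hm θ,
    cosh_injOn (Set.mem_Ici.2 dist_nonneg) (Set.mem_Ici.2 ha) hcosh⟩

lemma re_sq_add_im_sq_le_one {b : ℝ} (hb : 0 < b) {z : ℍ}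
    (h : ∀ s ∈ Set.Icc 0 b, dist (imagAxis 0) z ≤ dist (imagAxis s) z) :
    z.re ^ 2 + z.im ^ 2 ≤ 1 := by
  by_contra! hS
  set E := min (exp b) ((1 + (z.re ^ 2 + z.im ^ 2)) / 2)
  have hE1 : 1 < E := lt_min (one_lt_exp_iff.2 hb) (by linarith)
  have hES : E < z.re ^ 2 + z.im ^ 2 := (min_le_right _ _).trans_lt (by linarith)
  have hE0 : 0 < E := by linarith
  have hs : log E ∈ Set.Icc 0 b :=
    ⟨log_nonneg hE1.le, (log_le_iff_le_exp hE0).2 (min_le_left _ _)⟩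
  have hcosh : cosh (dist (imagAxis 0) z) ≤ cosh (dist (imagAxis (log E)) z) :=
    cosh_le_cosh.2 (abs_le_abs_of_nonneg dist_nonneg (h _ hs))
  rw [cosh_dist_imagAxis_zero, cosh_dist_imagAxis, exp_log hE0,
    div_le_div_iff₀ (by have := z.im_pos; positivity) (by have := z.im_pos; positivity)] at hcosh
  nlinarith [mul_pos (mul_pos (sub_pos.2 hE1) (sub_pos.2 hES)) z.im_pos]

section Algebra

-- `c` is the centre of the Euclidean circle through `p i` and `x + y i`, which carries the
-- geodesic between them; `x₀` is the abscissa chosen in `exists_geodLine_near_of_re_pos`.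
variable {p x y c x₀ : ℝ}

lemma center_neg (hp : 3 ≤ p ^ 2) (hx : 0 < x) (hS : x ^ 2 + y ^ 2 ≤ 1)
    (hc : 2 * x * c = x ^ 2 + y ^ 2 - p ^ 2) : c < 0 :=
  neg_of_mul_neg_right (a := 2 * x) (by linarith) (by linarith)

lemma four_mul_sq_center_ge (hp : 1 ≤ p ^ 2) (hx : 0 < x) (hS : x ^ 2 + y ^ 2 ≤ 1)
    (hc : 2 * x * c = x ^ 2 + y ^ 2 - p ^ 2) : p ^ 4 - 6 * p ^ 2 + 1 ≤ 4 * c ^ 2 := by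
  have hsq : 4 * c ^ 2 * x ^ 2 = (p ^ 2 - (x ^ 2 + y ^ 2)) ^ 2 := by
    linear_combination (2 * x * c + (x ^ 2 + y ^ 2 - p ^ 2)) * hc
  have hx1 : x ^ 2 ≤ 1 := by nlinarith [sq_nonneg y]
  have key : (p ^ 4 - 6 * p ^ 2 + 1) * x ^ 2 ≤ (p ^ 2 - (x ^ 2 + y ^ 2)) ^ 2 := by
    nlinarith [mul_nonneg (sub_nonneg.2 hS)
        (show (0:ℝ) ≤ 2 * p ^ 2 - (x ^ 2 + y ^ 2) - 1 by linarith),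
      mul_nonneg (sub_nonneg.2 hx1) (sq_nonneg (p ^ 2 - 1)),
      mul_nonneg (sq_nonneg p) (sq_nonneg x)]
  exact le_of_mul_le_mul_right (by linarith) (pow_pos hx 2)

lemma deepest_abscissa_mem (hp : 3 ≤ p ^ 2) (hx : 0 < x) (hS : x ^ 2 + y ^ 2 ≤ 1)
    (hc : 2 * x * c = x ^ 2 + y ^ 2 - p ^ 2) (hx₀ : x₀ * (2 * (c ^ 2 + 2)) = -c * (p ^ 2 - 3)) :
    0 ≤ x₀ ∧ x₀ ≤ x := by
  have hden : 0 < 2 * (c ^ 2 + 2) := by positivity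
  have hcneg := center_neg hp hx hS hc
  refine ⟨nonneg_of_mul_nonneg_left (by rw [hx₀]; nlinarith) hden, ?_⟩
  have hE : (x - x₀) * (2 * (c ^ 2 + 2)) * (2 * x)
      = (p ^ 2 - (x ^ 2 + y ^ 2)) * (3 - (x ^ 2 + y ^ 2)) + 8 * x ^ 2 := by
    linear_combination (2 * x * c + x ^ 2 + y ^ 2 - 3) * hc - (2 * x) * hx₀
  have : 0 ≤ (x - x₀) * (2 * (c ^ 2 + 2)) * (2 * x) := by
    rw [hE]; nlinarith
  nlinarith [nonneg_of_mul_nonneg_left this (by linarith : (0:ℝ) < 2 * x)]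

lemma deepest_abscissa_ineq (hx₀ : x₀ * (2 * (c ^ 2 + 2)) = -c * (p ^ 2 - 3))
    (h : p ^ 4 - 6 * p ^ 2 + 1 ≤ 4 * c ^ 2) :
    (p ^ 2 + 1 + 2 * c * x₀) ^ 2 ≤ 8 * (c ^ 2 + p ^ 2 - (x₀ - c) ^ 2) := by
  have hid : (4 * c ^ 2 + 8) * (8 * (c ^ 2 + p ^ 2 - (x₀ - c) ^ 2) - (p ^ 2 + 1 + 2 * c * x₀) ^ 2)
      = 8 * (4 * c ^ 2 - (p ^ 4 - 6 * p ^ 2 + 1)) := by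
    linear_combination (-4 * (x₀ * (2 * (c ^ 2 + 2)) + c * (p ^ 2 - 3))) * hx₀
  nlinarith [(show (0:ℝ) < 4 * c ^ 2 + 8 by positivity)]

end Algebra

lemma c₁_pos : 0 < c₁ := log_pos (by linarith [sqrt_pos.2 (show (0:ℝ) < 2 by norm_num)])

lemma exp_c₁ : exp c₁ = 1 + √2 := exp_log (by positivity)

lemma cosh_c₁ : cosh c₁ = √2 := by
  rw [cosh_eq, exp_neg, exp_c₁]
  field_simp
  nlinarith [sq_sqrt (show (0:ℝ) ≤ 2 by norm_num)]

lemma dist_imagAxis_zero_le_c₁ {z : ℍ} (h : (z.re ^ 2 + z.im ^ 2 + 1) ^ 2 ≤ 8 * z.im ^ 2) :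
    dist (imagAxis 0) z ≤ c₁ := by
  have hY := z.im_pos
  have hcosh : cosh (dist (imagAxis 0) z) ≤ cosh c₁ := by
    rw [cosh_c₁, cosh_dist_imagAxis_zero, div_le_iff₀ (by positivity)]
    refine (pow_le_pow_iff_left₀ (by positivity) (by positivity) two_ne_zero).1 ?_
    rw [mul_pow, sq_sqrt zero_le_two]
    linarith
  rwa [cosh_le_cosh, abs_of_nonneg dist_nonneg, abs_of_pos c₁_pos] at hcosh

lemma div_le_div_of_sq_add_sq_eq {s₁ s₂ y₁ y₂ r : ℝ} (hs₁ : 0 ≤ s₁) (hs : s₁ ≤ s₂)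
    (hy₁ : 0 < y₁) (hy₂ : 0 < y₂) (h₁ : s₁ ^ 2 + y₁ ^ 2 = r ^ 2) (h₂ : s₂ ^ 2 + y₂ ^ 2 = r ^ 2) :
    s₁ / y₁ ≤ s₂ / y₂ :=
  div_le_div₀ (hs₁.trans hs) hs hy₂
    ((pow_le_pow_iff_left₀ hy₂.le hy₁.le two_ne_zero).1 (by nlinarith))

lemma exists_geodLine_near_of_re_pos {b : ℝ} (hb : c₁ ≤ b) {z : ℍ} (hre : 0 < z.re)
    (hdisk : z.re ^ 2 + z.im ^ 2 ≤ 1) :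
    ∃ v : ℝ → ℍ, IsGeodLine v ∧ ∃ s w t, s ≤ w ∧ w ≤ t ∧ v s = imagAxis b ∧ v t = z ∧
      dist (imagAxis 0) (v w) ≤ c₁ := by
  set x := z.re
  set y := z.im
  set p := exp b
  have hp : 3 ≤ p ^ 2 := by
    have : 1 + √2 ≤ p := exp_c₁ ▸ exp_le_exp.2 hb
    nlinarith [sq_sqrt (show (0:ℝ) ≤ 2 by norm_num), sqrt_nonneg 2]
  set c := (x ^ 2 + y ^ 2 - p ^ 2) / (2 * x)
  have hc : 2 * x * c = x ^ 2 + y ^ 2 - p ^ 2 := mul_div_cancel₀ _ (by positivity)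
  have hcneg := center_neg hp hre hdisk hc
  -- Along the circle, `x₀` is the abscissa maximizing `8 (Im w)² - (|w|² + 1)²`, which is `≥ 0`
  -- exactly where `cosh (dist i w) ≤ √2 = cosh c₁`.
  set x₀ := -c * (p ^ 2 - 3) / (2 * (c ^ 2 + 2))
  have hx₀ : x₀ * (2 * (c ^ 2 + 2)) = -c * (p ^ 2 - 3) := div_mul_cancel₀ _ (by positivity)
  obtain ⟨hx₀0, hx₀x⟩ := deepest_abscissa_mem hp hre hdisk hc hx₀
  have hchord := deepest_abscissa_ineq hx₀ (four_mul_sq_center_ge (by linarith) hre hdisk hc)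
  have hr : 0 < c ^ 2 + p ^ 2 := by positivity
  set r := √(c ^ 2 + p ^ 2)
  have hr2 : r ^ 2 = c ^ 2 + p ^ 2 := sq_sqrt hr.le
  have hP : (0 - c) ^ 2 + p ^ 2 = r ^ 2 := by rw [hr2]; ring
  have hQ : (x - c) ^ 2 + y ^ 2 = r ^ 2 := by rw [hr2]; linear_combination -hc
  have hy₀ : 0 < r ^ 2 - (x₀ - c) ^ 2 := by
    nlinarith [z.im_pos, mul_le_mul (show x₀ - c ≤ x - c by linarith)
      (show x₀ - c ≤ x - c by linarith) (by linarith) (by linarith)]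
  set y₀ := √(r ^ 2 - (x₀ - c) ^ 2)
  have hy₀2 : y₀ ^ 2 = r ^ 2 - (x₀ - c) ^ 2 := sq_sqrt hy₀.le
  have hW : (x₀ - c) ^ 2 + y₀ ^ 2 = r ^ 2 := by rw [hy₀2]; ring
  refine ⟨arc c r (sqrt_pos.2 hr), isGeodLine_arc _ _ _, _, _, _,
    arsinh_le_arsinh.2 (div_le_div_of_sq_add_sq_eq (by linarith) (by linarith) (exp_pos b)
      (sqrt_pos.2 hy₀) hP hW),
    arsinh_le_arsinh.2 (div_le_div_of_sq_add_sq_eq (by linarith) (by linarith)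
      (sqrt_pos.2 hy₀) z.im_pos hW hQ),
    arc_arsinh _ (exp_pos b) hP, (arc_arsinh _ z.im_pos hQ).trans (ofReIm_re_im z), ?_⟩
  rw [arc_arsinh _ (sqrt_pos.2 hy₀) hW]
  apply dist_imagAxis_zero_le_c₁
  simp only [ofReIm_re, ofReIm_im]
  rw [hy₀2, show x₀ ^ 2 + (r ^ 2 - (x₀ - c) ^ 2) + 1 = p ^ 2 + 1 + 2 * c * x₀ by rw [hr2]; ring,
    hr2]
  exact hchord

lemma exists_isGeodSeg_dist_le_c₁ {b : ℝ} (hb : c₁ ≤ b) {z : ℍ} (hre : 0 ≤ z.re)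
    (hdisk : z.re ^ 2 + z.im ^ 2 ≤ 1) :
    ∃ σ : ℝ → ℍ, IsGeodSeg σ (imagAxis b) z ∧
      ∃ t ∈ Set.Icc 0 (dist (imagAxis b) z), dist (imagAxis 0) (σ t) ≤ c₁ := by
  obtain ⟨v, hv, s, w, t, hsw, hwt, hvs, hvt, hvw⟩ : ∃ v : ℝ → ℍ, IsGeodLine v ∧
      ∃ s w t, s ≤ w ∧ w ≤ t ∧ v s = imagAxis b ∧ v t = z ∧ dist (imagAxis 0) (v w) ≤ c₁ := by
    rcases hre.eq_or_lt with hre | hre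
    · have him : z.im ≤ 1 := by nlinarith [z.im_pos]
      refine ⟨fun u => imagAxis (-u), isGeodLine_imagAxis.comp_neg, -b, 0, -log z.im,
        by linarith [c₁_pos], by linarith [log_nonpos z.im_pos.le him], by simp, ?_,
        by simpa using c₁_pos.le⟩
      exact UpperHalfPlane.ext_re_im (by simp [hre]) (by simp [exp_log z.im_pos])
    · exact exists_geodLine_near_of_re_pos hb hre hdisk
  obtain ⟨σ, hσ, u, hu, hσu⟩ := hv.exists_isGeodSeg_through hsw hwt
  rw [hvs, hvt] at hσ hu
  exact ⟨σ, hσ, u, hu, by rwa [hσu]⟩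

end CATm1

open CATm1 in
/-- in a CAT(-1) geodesic space, if `x` is the closest point to `z` on the
segment `[x,y]`, then d(x, [y,z]) ≤ log(1+√2) = c₁. -/
theorem stmt8 (hX : CATm1 X) (x y z : X) (γ : ℝ → X) (hγ : IsGeodSeg γ x y)
    (hclosest : ∀ s ∈ Set.Icc (0 : ℝ) (dist x y), dist z x ≤ dist z (γ s)) :
    ∀ σ : ℝ → X, IsGeodSeg σ y z →
      ∃ t ∈ Set.Icc (0 : ℝ) (dist y z), dist x (σ t) ≤ c₁ := by
  intro σ hσ
  by_cases hb : dist x y ≤ c₁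
  · exact ⟨0, ⟨le_rfl, dist_nonneg⟩, by rwa [hσ.1]⟩
  push Not at hb
  obtain ⟨z', hre, hxz, hyz⟩ := exists_comparison_point (b := dist x y) dist_nonneg
    (by simpa only [dist_comm] using abs_dist_sub_le y z x)
    (by simpa only [dist_comm] using dist_triangle y x z)
  have hseg : IsGeodSeg imagAxis (imagAxis 0) (imagAxis (dist x y)) :=
    isGeodLine_imagAxis.isGeodSeg dist_nonneg
  have hxy : dist (imagAxis 0) (imagAxis (dist x y)) = dist x y := by
    rw [isGeodLine_imagAxis, zero_sub, abs_neg, abs_of_nonneg dist_nonneg]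
  have hobtuse : ∀ s ∈ Set.Icc 0 (dist x y), dist (imagAxis 0) z' ≤ dist (imagAxis s) z' :=
    fun s hs => calc
      dist (imagAxis 0) z' = dist z x := by rw [hxz, dist_comm]
      _ ≤ dist z (γ s) := hclosest s hs
      _ ≤ dist z' (imagAxis s) := hX.2 z x y γ hγ z' _ _ imagAxis hseg
          (by rw [dist_comm, ← hxz, dist_comm]) (by rw [dist_comm, ← hyz, dist_comm]) hxy.symm s hs
      _ = dist (imagAxis s) z' := dist_comm _ _
  obtain ⟨σ', hσ', t, ht, hnear⟩ := exists_isGeodSeg_dist_le_c₁ hb.le hre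
    (re_sq_add_im_sq_le_one (c₁_pos.trans hb) hobtuse)
  rw [hyz] at ht
  exact ⟨t, ht, (hX.2 x y z σ hσ _ _ _ σ' hσ' hxy.symm hxz.symm hyz.symm t ht).trans hnear⟩
end
end

section
/- Let X be a CAT(-1) geodesic metric space, ξ ∈ ∂_∞X, and x, y two points on a horosphere H centered at ξ. Let z be the closest point to ξ on [x,y] (the point minimizing the Busemann function β_ξ(·,x₀) on [x,y]). Then |d(x,z) - d(y,z)| ≤ 2 log(1+√2). -/
noncomputable section

open Filter

variable {X : Type*} [MetricSpace X]

/-! Comparing with the hyperbolic plane, where the median identity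
`cosh d(p,x) + cosh d(p,y) = 2 cosh (d(x,y)/2) cosh d(p,m)` holds for the midpoint `m` of
`[x,y]`, and letting `p = r t` run to infinity gives
`cosh (d(x,y)/2) e^{b m} ≤ (e^{b x} + e^{b y}) / 2`. On a horosphere (`b x = b y`) this says
`d(x,y)/2 + b m ≤ log 2 + b x`. As `b` is 1-Lipschitz and `z` minimizes `b` on `[x,y]`,
`b x ≤ d(x,z) + b z ≤ d(x,z) + b m`, so `d(x,z) ≥ d(x,y)/2 - log 2`, and likewise for `y`.
Hence `|d(x,z) - d(y,z)| ≤ 2 log 2 ≤ 2 c₁`. -/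

namespace UpperHalfPlane

def imAxis (u : ℝ) : ℍ := mk ⟨0, Real.exp u⟩ (Real.exp_pos u)

@[simp] theorem imAxis_re (u : ℝ) : (imAxis u).re = 0 := rfl

@[simp] theorem imAxis_im (u : ℝ) : (imAxis u).im = Real.exp u := rfl

theorem dist_imAxis (s t : ℝ) : dist (imAxis s) (imAxis t) = |s - t| :=
  ((isometry_vertical_line 0).dist_eq s t).trans (Real.dist_eq s t)

theorem isGeodSeg_imAxis {L : ℝ} (hL : 0 ≤ L) : IsGeodSeg imAxis (imAxis 0) (imAxis L) := by
  have hd : dist (imAxis 0) (imAxis L) = L := by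
    rw [dist_imAxis, zero_sub, abs_neg, abs_of_nonneg hL]
  exact ⟨rfl, by rw [hd], fun s _ t _ => dist_imAxis s t⟩

theorem isPreconnected_sphere (z : ℍ) (r : ℝ) : IsPreconnected (Metric.sphere z r) := by
  rw [← isEmbedding_coe.isInducing.isPreconnected_image, image_coe_sphere]
  exact _root_.isPreconnected_sphere (by simp [Complex.rank_real_complex]) _ _

theorem exists_dist_imAxis_eq {L d₁ d₂ : ℝ} (hL : 0 ≤ L) (h₁ : 0 ≤ d₁)
    (h₂ : |d₁ - L| ≤ d₂) (h₂' : d₂ ≤ d₁ + L) :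
    ∃ p : ℍ, dist p (imAxis 0) = d₁ ∧ dist p (imAxis L) = d₂ := by
  have hmem : ∀ s, |s| = d₁ → imAxis s ∈ Metric.sphere (imAxis 0) d₁ := fun s hs => by
    rwa [Metric.mem_sphere, dist_imAxis, sub_zero]
  exact (isPreconnected_sphere (imAxis 0) d₁).intermediate_value
    (hmem d₁ (abs_of_nonneg h₁)) (hmem (-d₁) (by rw [abs_neg, abs_of_nonneg h₁]))
    (continuous_id.dist continuous_const).continuousOn
    (show d₂ ∈ Set.Icc (dist (imAxis d₁) (imAxis L)) (dist (imAxis (-d₁)) (imAxis L)) by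
      rw [dist_imAxis, dist_imAxis, abs_of_nonpos (by linarith : -d₁ - L ≤ 0)]
      exact ⟨h₂, by linarith⟩)

theorem cosh_dist_imAxis_add_cosh_dist_imAxis (p : ℍ) (L : ℝ) :
    Real.cosh (dist p (imAxis 0)) + Real.cosh (dist p (imAxis L)) =
      2 * Real.cosh (L / 2) * Real.cosh (dist p (imAxis (L / 2))) := by
  have hL : Real.exp L = Real.exp (L / 2) ^ 2 := by rw [← Real.exp_nat_mul]; ring_nf
  rw [cosh_dist', cosh_dist', cosh_dist', Real.cosh_eq, Real.exp_neg]
  simp only [imAxis_re, imAxis_im, Real.exp_zero, hL]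
  have := p.im_pos
  field_simp
  ring

end UpperHalfPlane

open UpperHalfPlane

theorem c₁_ge_log_two : Real.log 2 ≤ c₁ :=
  Real.log_le_log two_pos (by linarith [Real.one_lt_sqrt_two])

namespace IsGeodSeg

variable {γ : ℝ → X} {x y : X} {t : ℝ}

theorem dist_left (hγ : IsGeodSeg γ x y) (ht : t ∈ Set.Icc 0 (dist x y)) :
    dist x (γ t) = t := by
  conv_lhs => rw [← hγ.1]
  rw [hγ.2.2 0 ⟨le_rfl, dist_nonneg⟩ t ht, zero_sub, abs_neg, abs_of_nonneg ht.1]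

theorem dist_right (hγ : IsGeodSeg γ x y) (ht : t ∈ Set.Icc 0 (dist x y)) :
    dist y (γ t) = dist x y - t := by
  conv_lhs => rw [← hγ.2.1]
  rw [hγ.2.2 _ ⟨dist_nonneg, le_rfl⟩ t ht, abs_of_nonneg (sub_nonneg.2 ht.2)]

end IsGeodSeg

theorem CATm1.cosh_dist_midpoint_le (hX : CATm1 X) {γ : ℝ → X} {x y : X}
    (hγ : IsGeodSeg γ x y) (p : X) :
    2 * Real.cosh (dist x y / 2) * Real.cosh (dist p (γ (dist x y / 2))) ≤
      Real.cosh (dist p x) + Real.cosh (dist p y) := by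
  set L := dist x y
  have hL : 0 ≤ L := dist_nonneg
  obtain ⟨p', hp'x, hp'y⟩ :=
    exists_dist_imAxis_eq (d₁ := dist p x) (d₂ := dist p y) hL dist_nonneg
    (abs_sub_le_iff.2 ⟨by linarith [dist_triangle p y x, dist_comm x y],
      by linarith [dist_triangle x p y, dist_comm p x]⟩)
    (by linarith [dist_triangle p x y])
  have hcomp : dist p (γ (L / 2)) ≤ dist p' (imAxis (L / 2)) :=
    hX.2 p x y γ hγ p' (imAxis 0) (imAxis L) imAxis (isGeodSeg_imAxis hL) hp'x.symm hp'y.symm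
      (by rw [dist_imAxis, zero_sub, abs_neg, abs_of_nonneg hL]) (L / 2)
      ⟨by linarith, by linarith⟩
  rw [← hp'x, ← hp'y, cosh_dist_imAxis_add_cosh_dist_imAxis]
  gcongr
  exact Real.cosh_le_cosh.2 (by rwa [abs_of_nonneg dist_nonneg, abs_of_nonneg dist_nonneg])

theorem cosh_mul_exp_le_of_two_mul_cosh_mul_cosh_le {c a u v : ℝ} (hu : 0 ≤ u) (hv : 0 ≤ v)
    (h : 2 * Real.cosh c * Real.cosh a ≤ Real.cosh u + Real.cosh v) :
    Real.cosh c * Real.exp a ≤ (Real.exp u + Real.exp v) / 2 + 1 := by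
  have ha : Real.exp a ≤ 2 * Real.cosh a := by
    rw [Real.cosh_eq]; linarith [Real.exp_pos (-a)]
  have hu' : Real.exp (-u) ≤ 1 := Real.exp_le_one_iff.2 (neg_nonpos.2 hu)
  have hv' : Real.exp (-v) ≤ 1 := Real.exp_le_one_iff.2 (neg_nonpos.2 hv)
  rw [Real.cosh_eq u, Real.cosh_eq v] at h
  nlinarith [Real.cosh_pos c]

section Busemann

variable {r : ℝ → X} {b : X → ℝ}

theorem busemann_le_dist_add
    (hb : ∀ p, Tendsto (fun t : ℝ => dist p (r t) - t) atTop (nhds (b p))) (p q : X) :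
    b p ≤ dist p q + b q :=
  le_of_tendsto_of_tendsto' (hb p) ((hb q).const_add _) fun t => by
    linarith [dist_triangle p q (r t)]

theorem CATm1.cosh_mul_exp_busemann_midpoint_le (hX : CATm1 X)
    (hb : ∀ p, Tendsto (fun t : ℝ => dist p (r t) - t) atTop (nhds (b p)))
    {γ : ℝ → X} {x y : X} (hγ : IsGeodSeg γ x y) :
    Real.cosh (dist x y / 2) * Real.exp (b (γ (dist x y / 2))) ≤
      (Real.exp (b x) + Real.exp (b y)) / 2 := by
  have hexp : ∀ p, Tendsto (fun t : ℝ => Real.exp (dist p (r t) - t)) atTop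
      (nhds (Real.exp (b p))) := fun p => (Real.continuous_exp.tendsto _).comp (hb p)
  have hrhs := (((hexp x).add (hexp y)).div_const 2).add Real.tendsto_exp_neg_atTop_nhds_zero
  rw [add_zero] at hrhs
  refine le_of_tendsto_of_tendsto' ((hexp _).const_mul _) hrhs fun t => ?_
  have key := cosh_mul_exp_le_of_two_mul_cosh_mul_cosh_le dist_nonneg dist_nonneg
    (hX.cosh_dist_midpoint_le hγ (r t))
  have key_t := mul_le_mul_of_nonneg_right key (Real.exp_pos (-t)).le
  simp only [sub_eq_add_neg, Real.exp_add, dist_comm _ (r t)]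
  linarith

theorem CATm1.half_dist_add_busemann_midpoint_le (hX : CATm1 X)
    (hb : ∀ p, Tendsto (fun t : ℝ => dist p (r t) - t) atTop (nhds (b p)))
    {γ : ℝ → X} {x y : X} (hγ : IsGeodSeg γ x y) (hxy : b x = b y) :
    dist x y / 2 + b (γ (dist x y / 2)) ≤ Real.log 2 + b x := by
  have h := hX.cosh_mul_exp_busemann_midpoint_le hb hγ
  rw [← hxy, add_self_div_two] at h
  have hcosh : Real.exp (dist x y / 2) / 2 ≤ Real.cosh (dist x y / 2) := by
    rw [Real.cosh_eq]; linarith [Real.exp_pos (-(dist x y / 2))]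
  rw [← Real.exp_le_exp, Real.exp_add, Real.exp_add, Real.exp_log two_pos]
  linarith [mul_le_mul_of_nonneg_right hcosh (Real.exp_pos (b (γ (dist x y / 2)))).le]

end Busemann

theorem stmt10_general (hX : CATm1 X) (r : ℝ → X)
    (b : X → ℝ)
    (hb : ∀ p : X, Tendsto (fun t : ℝ => dist p (r t) - t) atTop (nhds (b p)))
    (x y : X) (hxy : b x = b y)
    (γ : ℝ → X) (hγ : IsGeodSeg γ x y)
    (t₀ : ℝ) (ht₀ : t₀ ∈ Set.Icc (0 : ℝ) (dist x y)) (z : X) (hz : z = γ t₀)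
    (hmin : ∀ s ∈ Set.Icc (0 : ℝ) (dist x y), b z ≤ b (γ s)) :
    |dist x z - dist y z| ≤ 2 * c₁ := by
  subst hz
  have hmid := hX.half_dist_add_busemann_midpoint_le hb hγ hxy
  have hzmid := hmin (dist x y / 2) ⟨by positivity, by linarith [dist_nonneg (x := x) (y := y)]⟩
  have hxz := busemann_le_dist_add hb x (γ t₀)
  have hyz := busemann_le_dist_add hb y (γ t₀)
  rw [hγ.dist_left ht₀] at hxz ⊢
  rw [hγ.dist_right ht₀] at hyz ⊢
  rw [abs_le]
  constructor <;> linarith [c₁_ge_log_two]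

/-- let ξ ∈ ∂_∞X be the point at infinity of the geodesic ray `r`, with
Busemann function `b` (so x,y lie on a common horosphere centered at ξ iff b x = b y).
If `z` is the point of the segment `[x,y]` closest to ξ (minimizing `b` on `[x,y]`),
then |d(x,z) - d(y,z)| ≤ 2 log(1+√2) = 2 c₁. -/
theorem stmt10 (hX : CATm1 X) (r : ℝ → X) (hr : IsGeodRay r)
    (b : X → ℝ)
    (hb : ∀ p : X, Tendsto (fun t : ℝ => dist p (r t) - t) atTop (nhds (b p)))
    (x y : X) (hxy : b x = b y)
    (γ : ℝ → X) (hγ : IsGeodSeg γ x y)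
    (t₀ : ℝ) (ht₀ : t₀ ∈ Set.Icc (0 : ℝ) (dist x y)) (z : X) (hz : z = γ t₀)
    (hmin : ∀ s ∈ Set.Icc (0 : ℝ) (dist x y), b z ≤ b (γ s)) :
    |dist x z - dist y z| ≤ 2 * c₁ :=
  stmt10_general hX r b hb x y hxy γ hγ t₀ ht₀ z hz hmin
end
end
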